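/- Characterization of contractive formal multipliers: let F, F' be complex Hilbert spaces, let (H, (π_n)_{n ∈ ℤ^d}) and (H', (π'_n)_{n ∈ ℤ^d}) be coefficient data of formal reproducing kernel Hilbert spaces with coefficient spaces F and F', with (π'_n) separating. Let S : ℤ^d → L(F, F') be such that for every n ∈ ℤ^d the partial sums Σ_{|ℓ| ≤ L} S(n−ℓ) ∘ π_ℓ converge in the weak operator topology as L → ∞. Then for all n, m ∈ ℤ^d the iterated WOT sums Γ(n, m) := Σ_ℓ ( Σ_{ℓ'} S(n−ℓ) π_ℓ π_{ℓ'}^* S(m−ℓ')^* ) exist (in either order of summation, with the same value), and the following are equivalent: (i) there exists a bounded linear operator M : H → H' with ‖M‖ ≤ 1 such that for every f ∈ H and n ∈ ℤ^d, π'_n(M f) equals the weak limit of Σ_{|ℓ| ≤ L} S(n−ℓ)(π_ℓ f); (ii) the kernel (n, m) ↦ π'_n (π'_m)^* − Γ(n, m) is a positive kernel. Moreover, when these hold the operator M is unique, and M is a coisometry (M M^* = I_{H'}) if and only if π'_n (π'_m)^* = Γ(n, m) for all n, m ∈ ℤ^d. -/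

import Mathlib

open ContinuousLinearMap Filter
open scoped ComplexOrder

/-- The finite "ball" `{ℓ ∈ ℤ^d : |ℓ₁| + ⋯ + |ℓ_d| ≤ L}`. -/
noncomputable def intBall (d L : ℕ) : Finset (Fin d → ℤ) :=
  (Finset.Icc (fun _ => -(L : ℤ)) fun _ => (L : ℤ)).filter fun ℓ => ∑ i, |ℓ i| ≤ (L : ℤ)

/-- Convergence of a sequence of bounded operators in the weak operator topology. -/
def WOTTendsto {X Y : Type*} [NormedAddCommGroup X] [InnerProductSpace ℂ X]
    [NormedAddCommGroup Y] [InnerProductSpace ℂ Y]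
    (T : ℕ → X →L[ℂ] Y) (T0 : X →L[ℂ] Y) : Prop :=
  ∀ x y, Tendsto (fun L => (inner ℂ (T L x) y : ℂ)) atTop (nhds (inner ℂ (T0 x) y : ℂ))

/-- An operator-valued kernel `K : ℤ^d × ℤ^d → L(F)` is a positive kernel if
`∑_{n,m} ⟨K(n,m) u(m), u(n)⟩ ≥ 0` for every finitely supported `u : ℤ^d → F`. -/
def IsPosKernel {d : ℕ} {F : Type*} [NormedAddCommGroup F] [InnerProductSpace ℂ F]
    (K : (Fin d → ℤ) → (Fin d → ℤ) → F →L[ℂ] F) : Prop :=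
  ∀ u : (Fin d → ℤ) →₀ F,
    0 ≤ ∑ n ∈ u.support, ∑ m ∈ u.support, (inner ℂ (K n m (u m)) (u n) : ℂ)

/-!
Write `Φ u = ∑ₙ π'ₙ* (u n)` and `Ψ u = ∑ₙ Tₙ* (u n)` for finitely supported `u`. The quadratic
form of the kernel `π'ₙ π'ₘ* - Tₙ Tₘ*` at `u` is `‖Φ u‖² - ‖Ψ u‖²`, and `Φ` has dense range
because `(π'ₙ)` is separating. So the kernel is positive iff `Φ u ↦ Ψ u` is a well-defined
contraction on a dense subspace, whose extension `W` gives `M = W*`; conversely `Ψ = M* Φ`.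
The same density shows that `M M* = 1` can be tested on the vectors `π'ₘ* v`, where it reads
`π'ₙ π'ₘ* = Tₙ Tₘ*`. The iterated sums only use that WOT convergence is preserved by adjoints and
by composing with a fixed operator on either side.
-/

section WeakOperatorTopology

variable {X Y Z : Type*} [NormedAddCommGroup X] [InnerProductSpace ℂ X]
  [NormedAddCommGroup Y] [InnerProductSpace ℂ Y] [NormedAddCommGroup Z] [InnerProductSpace ℂ Z]
  {A : ℕ → X →L[ℂ] Y} {A₀ : X →L[ℂ] Y}

theorem WOTTendsto.comp_const (h : WOTTendsto A A₀) (C : Z →L[ℂ] X) :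
    WOTTendsto (fun L => A L ∘L C) (A₀ ∘L C) :=
  fun x y => h (C x) y

theorem WOTTendsto.const_comp [CompleteSpace Y] [CompleteSpace Z] (h : WOTTendsto A A₀)
    (C : Y →L[ℂ] Z) : WOTTendsto (fun L => C ∘L A L) (C ∘L A₀) := by
  intro x z
  simpa only [comp_apply, ← adjoint_inner_right C] using h x (adjoint C z)

theorem WOTTendsto.adjoint [CompleteSpace X] [CompleteSpace Y] (h : WOTTendsto A A₀) :
    WOTTendsto (fun L => adjoint (A L)) (adjoint A₀) := by
  intro y x
  simpa only [adjoint_inner_left, Function.comp_def, inner_conj_symm] using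
    (Complex.continuous_conj.tendsto _).comp (h x y)

end WeakOperatorTopology

section SeparatingFamily

variable {ι X Y Z : Type*} [NormedAddCommGroup X] [InnerProductSpace ℂ X]
  [NormedAddCommGroup Y] [InnerProductSpace ℂ Y] [NormedAddCommGroup Z] [InnerProductSpace ℂ Z]

def IsSeparating (A : ι → X →L[ℂ] Z) : Prop :=
  ∀ x, (∀ i, A i x = 0) → x = 0

theorem IsSeparating.ext {A : ι → X →L[ℂ] Z} (hA : IsSeparating A) {M M' : Y →L[ℂ] X}
    (h : ∀ i y, A i (M y) = A i (M' y)) : M = M' :=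
  ContinuousLinearMap.ext fun y => sub_eq_zero.mp <| hA _ fun i => by rw [map_sub, h, sub_self]

variable [CompleteSpace X] [CompleteSpace Z]

noncomputable def adjointSum (A : ι → X →L[ℂ] Z) : (ι →₀ Z) →ₗ[ℂ] X :=
  Finsupp.lsum ℂ fun i => (adjoint (A i) : Z →ₗ[ℂ] X)

theorem adjointSum_apply (A : ι → X →L[ℂ] Z) (u : ι →₀ Z) :
    adjointSum A u = ∑ i ∈ u.support, adjoint (A i) (u i) :=
  rfl

@[simp]
theorem adjointSum_single (A : ι → X →L[ℂ] Z) (i : ι) (z : Z) :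
    adjointSum A (Finsupp.single i z) = adjoint (A i) z := by
  simp [adjointSum]

theorem inner_adjointSum_self (A : ι → X →L[ℂ] Z) (u : ι →₀ Z) :
    inner ℂ (adjointSum A u) (adjointSum A u) =
      ∑ i ∈ u.support, ∑ j ∈ u.support, inner ℂ (A i (adjoint (A j) (u j))) (u i) := by
  rw [adjointSum_apply, sum_inner, Finset.sum_comm]
  simp only [inner_sum, ← adjoint_inner_right]

theorem denseRange_adjointSum {A : ι → X →L[ℂ] Z} (hA : IsSeparating A) :
    DenseRange (adjointSum A) := by
  rw [DenseRange, ← LinearMap.coe_range, Submodule.dense_iff_topologicalClosure_eq_top,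
    Submodule.topologicalClosure_eq_top_iff, Submodule.eq_bot_iff]
  refine fun x hx => hA x fun i => (inner_self_eq_zero (𝕜 := ℂ)).mp ?_
  rw [← adjoint_inner_left]
  exact (Submodule.mem_orthogonal _ x).1 hx _ ⟨Finsupp.single i (A i x), adjointSum_single ..⟩

variable [CompleteSpace Y]

theorem adjointSum_comp (A : ι → X →L[ℂ] Z) (M : Y →L[ℂ] X) (u : ι →₀ Z) :
    adjointSum (fun i => A i ∘L M) u = adjoint M (adjointSum A u) := by
  simp only [adjointSum_apply, adjoint_comp, map_sum, comp_apply]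

theorem exists_norm_le_one_comp_eq_iff {A : ι → X →L[ℂ] Z} {B : ι → Y →L[ℂ] Z}
    (hA : IsSeparating A) :
    (∃ M : Y →L[ℂ] X, ‖M‖ ≤ 1 ∧ ∀ i y, A i (M y) = B i y) ↔
      ∀ u, ‖adjointSum B u‖ ≤ ‖adjointSum A u‖ := by
  constructor
  · rintro ⟨M, hM, hMB⟩ u
    obtain rfl : B = fun i => A i ∘L M := funext fun i => ext fun y => (hMB i y).symm
    rw [adjointSum_comp]
    calc ‖adjoint M (adjointSum A u)‖ ≤ ‖adjoint M‖ * ‖adjointSum A u‖ := le_opNorm _ _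
      _ ≤ ‖adjointSum A u‖ := by
        rw [LinearIsometryEquiv.norm_map]
        exact mul_le_of_le_one_left (norm_nonneg _) hM
  · intro hle
    have hle' : ∀ u, ‖adjointSum B u‖ ≤ 1 * ‖adjointSum A u‖ := by simpa using hle
    set W : X →L[ℂ] Y := (adjointSum B).extendOfNorm (adjointSum A)
    have hW : ∀ u, W (adjointSum A u) = adjointSum B u :=
      LinearMap.extendOfNorm_eq (denseRange_adjointSum hA) ⟨1, hle'⟩
    refine ⟨adjoint W, ?_, fun i y => ext_inner_right ℂ fun z => ?_⟩
    · rw [LinearIsometryEquiv.norm_map]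
      exact LinearMap.opNorm_extendOfNorm_le (denseRange_adjointSum hA) zero_le_one hle'
    · rw [← adjoint_inner_right, adjoint_inner_left, ← adjointSum_single, hW,
        adjointSum_single, adjoint_inner_right]

theorem comp_adjoint_eq_one_iff {A : ι → X →L[ℂ] Z} (hA : IsSeparating A) (M : Y →L[ℂ] X) :
    M ∘L adjoint M = 1 ↔
      ∀ i j, A i ∘L adjoint (A j) = (A i ∘L M) ∘L adjoint (A j ∘L M) := by
  constructor
  · intro h i j
    rw [adjoint_comp, comp_assoc, ← comp_assoc M, h, one_def, id_comp]
  · intro h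
    have hcomp : ∀ i, (M ∘L adjoint M) ∘L adjoint (A i) = adjoint (A i) := fun i =>
      hA.ext fun j z => by
        simpa [adjoint_comp] using (DFunLike.congr_fun (h j i) z).symm
    refine ext fun x => congrFun ((denseRange_adjointSum hA).equalizer
      (M ∘L adjoint M).continuous continuous_id (funext fun u => ?_)) x
    simp only [Function.comp_apply, adjointSum_apply, map_sum, id_eq]
    exact Finset.sum_congr rfl fun i _ => DFunLike.congr_fun (hcomp i) (u i)

end SeparatingFamily

theorem isPosKernel_sub_iff {d : ℕ} {X Y Z : Type*}
    [NormedAddCommGroup X] [InnerProductSpace ℂ X] [CompleteSpace X]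
    [NormedAddCommGroup Y] [InnerProductSpace ℂ Y] [CompleteSpace Y]
    [NormedAddCommGroup Z] [InnerProductSpace ℂ Z] [CompleteSpace Z]
    (A : (Fin d → ℤ) → X →L[ℂ] Z) (B : (Fin d → ℤ) → Y →L[ℂ] Z) :
    IsPosKernel (fun n m => A n ∘L adjoint (A m) - B n ∘L adjoint (B m)) ↔
      ∀ u, ‖adjointSum B u‖ ≤ ‖adjointSum A u‖ := by
  refine forall_congr' fun u => ?_
  simp only [sub_apply, comp_apply, inner_sub_left, Finset.sum_sub_distrib,
    ← inner_adjointSum_self, inner_self_eq_norm_sq_to_K]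
  norm_cast
  rw [RCLike.ofReal_nonneg, sub_nonneg]
  exact pow_le_pow_iff_left₀ (norm_nonneg _) (norm_nonneg _) two_ne_zero

/-- **Characterization of contractive formal multipliers.**
With `T(n)` the WOT limits of the convolution sums `∑_ℓ S(n-ℓ) π_ℓ`:
the iterated WOT sums `Γ(n,m)` of `S(n-ℓ) π_ℓ π_{ℓ'}* S(m-ℓ')*` exist in either order
and equal `T(n) T(m)*`; there is a contractive multiplication operator `M` with
`π'_n (M f) = T(n) f` iff the kernel `π'_n π'_m* - Γ(n,m)` is positive; such `M` is
unique; and `M` is a coisometry iff `π'_n π'_m* = Γ(n,m)` for all `n, m`. -/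
theorem contractive_multiplier_characterization
    {d : ℕ} {F F' H H' : Type*}
    [NormedAddCommGroup F] [InnerProductSpace ℂ F] [CompleteSpace F]
    [NormedAddCommGroup F'] [InnerProductSpace ℂ F'] [CompleteSpace F']
    [NormedAddCommGroup H] [InnerProductSpace ℂ H] [CompleteSpace H]
    [NormedAddCommGroup H'] [InnerProductSpace ℂ H'] [CompleteSpace H']
    (π : (Fin d → ℤ) → H →L[ℂ] F) (π' : (Fin d → ℤ) → H' →L[ℂ] F')
    (hsep' : ∀ g : H', (∀ n, π' n g = 0) → g = 0)
    (S : (Fin d → ℤ) → F →L[ℂ] F')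
    (T : (Fin d → ℤ) → H →L[ℂ] F')
    (hT : ∀ n, WOTTendsto (fun L => ∑ ℓ ∈ intBall d L, S (n - ℓ) ∘L π ℓ) (T n)) :
    (∀ n m : Fin d → ℤ,
      (∀ ℓ, WOTTendsto
        (fun L' => ∑ ℓ' ∈ intBall d L',
          S (n - ℓ) ∘L π ℓ ∘L adjoint (π ℓ') ∘L adjoint (S (m - ℓ')))
        (S (n - ℓ) ∘L π ℓ ∘L adjoint (T m))) ∧
      WOTTendsto (fun L => ∑ ℓ ∈ intBall d L, S (n - ℓ) ∘L π ℓ ∘L adjoint (T m))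
        (T n ∘L adjoint (T m)) ∧
      (∀ ℓ', WOTTendsto
        (fun L => ∑ ℓ ∈ intBall d L,
          S (n - ℓ) ∘L π ℓ ∘L adjoint (π ℓ') ∘L adjoint (S (m - ℓ')))
        (T n ∘L adjoint (π ℓ') ∘L adjoint (S (m - ℓ')))) ∧
      WOTTendsto (fun L' => ∑ ℓ' ∈ intBall d L', T n ∘L adjoint (π ℓ') ∘L adjoint (S (m - ℓ')))
        (T n ∘L adjoint (T m))) ∧
    ((∃ M : H →L[ℂ] H', ‖M‖ ≤ 1 ∧ ∀ n f, π' n (M f) = T n f) ↔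
      IsPosKernel fun n m => π' n ∘L adjoint (π' m) - T n ∘L adjoint (T m)) ∧
    (∀ M M' : H →L[ℂ] H',
      (∀ n f, π' n (M f) = T n f) → (∀ n f, π' n (M' f) = T n f) → M = M') ∧
    (∀ M : H →L[ℂ] H', ‖M‖ ≤ 1 → (∀ n f, π' n (M f) = T n f) →
      (M ∘L adjoint M = 1 ↔ ∀ n m, π' n ∘L adjoint (π' m) = T n ∘L adjoint (T m))) := by
  refine ⟨fun n m => ⟨fun ℓ => ?_, ?_, fun ℓ' => ?_, ?_⟩,
    (exists_norm_le_one_comp_eq_iff hsep').trans (isPosKernel_sub_iff π' T).symm,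
    fun M M' hM hM' => IsSeparating.ext hsep' fun n f => (hM n f).trans (hM' n f).symm,
    fun M _ hM => ?_⟩
  · simpa only [map_sum, comp_finsetSum, adjoint_comp, comp_assoc] using
      (hT m).adjoint.const_comp (S (n - ℓ) ∘L π ℓ)
  · simpa only [finsetSum_comp, comp_assoc] using (hT n).comp_const (adjoint (T m))
  · simpa only [finsetSum_comp, comp_assoc] using
      (hT n).comp_const (adjoint (π ℓ') ∘L adjoint (S (m - ℓ')))
  · simpa only [map_sum, comp_finsetSum, adjoint_comp] using (hT m).adjoint.const_comp (T n)
  · obtain rfl : T = fun n => π' n ∘L M := funext fun n => ext fun f => (hM n f).symm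
    exact comp_adjoint_eq_one_iff hsep' M
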